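/- arXiv:2512.08049 — 6 statements merged into one kernel-verified Lean document; each statement's English description precedes it below -/
import Mathlib

section
/- Let D be an oriented graph and H = H_{π/3}(D) its Hermitian adjacency matrix, with entries H_{uv} = e^{iπ/3} if (u,v) is an arc, e^{−iπ/3} if (v,u) is an arc, and 0 otherwise. If t₀ is the number of transitive triangles and t₁ the number of directed triangles in D, then trace(H³) = 3t₀ − 6t₁. -/
open Matrix

theorem sixsum' {n : ℕ} (arc : Fin n → Fin n → Prop) [DecidableRel arc]
    (hasym : ∀ u v, arc u v → ¬ arc v u)
    (a b : ℂ) (hab : a * b = 1) (habs : a + b = 1) (ha3 : a^3 = -1) (hb3 : b^3 = -1)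
    (H : Matrix (Fin n) (Fin n) ℂ)
    (hH : ∀ u v, H u v = if arc u v then a else if arc v u then b else 0)
    (u v w : Fin n) :
    H u v * H v w * H w u + H u w * H w v * H v u + H v w * H w u * H u v
      + H v u * H u w * H w v + H w u * H u v * H v w + H w v * H v u * H u w
    = 3 * (if ((arc u v ∨ arc v u) ∧ (arc v w ∨ arc w v) ∧ (arc u w ∨ arc w u) ∧
          ¬ ((arc u v ∧ arc v w ∧ arc w u) ∨ (arc v u ∧ arc w v ∧ arc u w))) then 1 else 0)
      - 6 * (if ((arc u v ∧ arc v w ∧ arc w u) ∨ (arc v u ∧ arc w v ∧ arc u w)) then 1 else 0) := by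
  simp only [hH]
  by_cases p1 : arc u v <;> by_cases p2 : arc v u <;>
  by_cases p3 : arc v w <;> by_cases p4 : arc w v <;>
  by_cases p5 : arc u w <;> by_cases p6 : arc w u <;>
  first
    | exact absurd p2 (hasym _ _ p1)
    | exact absurd p4 (hasym _ _ p3)
    | exact absurd p6 (hasym _ _ p5)
    | (simp only [p1, p2, p3, p4, p5, p6, if_true, if_false, ite_true, ite_false,
        not_true, not_false_iff, true_and, and_true, false_and, and_false,
        true_or, or_true, false_or, or_false, not_or, and_self]
       first
        | ring1
        | (linear_combination 3*ha3 + 3*hb3; done)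
        | (linear_combination 3*(a+b)*hab + 3*habs; done)
        | norm_num)

theorem split6 {n : ℕ} (G : Fin n × Fin n × Fin n → ℂ)
    (hz : ∀ p : Fin n × Fin n × Fin n, p.1 = p.2.1 ∨ p.2.1 = p.2.2 ∨ p.1 = p.2.2 → G p = 0) :
    ∑ p : Fin n × Fin n × Fin n, G p
      = ∑ p ∈ Finset.univ.filter (fun p : Fin n × Fin n × Fin n => p.1 < p.2.1 ∧ p.2.1 < p.2.2),
        (G p + G (p.1, p.2.2, p.2.1) + G (p.2.1, p.2.2, p.1)
          + G (p.2.1, p.1, p.2.2) + G (p.2.2, p.1, p.2.1) + G (p.2.2, p.2.1, p.1)) := by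
  classical
  have h1 : ∑ p : Fin n × Fin n × Fin n, G p
      = ∑ p ∈ Finset.univ.filter
          (fun p : Fin n × Fin n × Fin n => p.1 ≠ p.2.1 ∧ p.2.1 ≠ p.2.2 ∧ p.1 ≠ p.2.2), G p := by
    refine (Finset.sum_filter_of_ne ?_).symm
    intro p _ hGp
    by_contra hc
    exact hGp (hz p (by tauto))
  have pt : ∀ p : Fin n × Fin n × Fin n, G p =
      (if p.1 < p.2.1 ∧ p.2.1 < p.2.2 ∧ p.1 < p.2.2 then G p else 0)
    + (if p.1 < p.2.1 ∧ p.2.1 < p.2.2 ∧ ¬ p.1 < p.2.2 then G p else 0)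
    + (if p.1 < p.2.1 ∧ ¬ p.2.1 < p.2.2 ∧ p.1 < p.2.2 then G p else 0)
    + (if p.1 < p.2.1 ∧ ¬ p.2.1 < p.2.2 ∧ ¬ p.1 < p.2.2 then G p else 0)
    + (if ¬ p.1 < p.2.1 ∧ p.2.1 < p.2.2 ∧ p.1 < p.2.2 then G p else 0)
    + (if ¬ p.1 < p.2.1 ∧ p.2.1 < p.2.2 ∧ ¬ p.1 < p.2.2 then G p else 0)
    + (if ¬ p.1 < p.2.1 ∧ ¬ p.2.1 < p.2.2 ∧ p.1 < p.2.2 then G p else 0)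
    + (if ¬ p.1 < p.2.1 ∧ ¬ p.2.1 < p.2.2 ∧ ¬ p.1 < p.2.2 then G p else 0) := by
    intro p
    by_cases h1 : p.1 < p.2.1 <;> by_cases h2 : p.2.1 < p.2.2 <;> by_cases h3 : p.1 < p.2.2 <;>
      simp [h1, h2, h3]
  rw [h1, Finset.sum_congr rfl (fun p _ => pt p)]
  simp only [Finset.sum_add_distrib, ← Finset.sum_filter, Finset.filter_filter]
  have hT1 : ∑ x ∈ Finset.filter (fun a : Fin n × Fin n × Fin n =>
        (a.1 ≠ a.2.1 ∧ a.2.1 ≠ a.2.2 ∧ a.1 ≠ a.2.2) ∧ a.1 < a.2.1 ∧ a.2.1 < a.2.2 ∧ a.1 < a.2.2)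
        Finset.univ, G x
      = ∑ p ∈ Finset.univ.filter (fun p : Fin n × Fin n × Fin n => p.1 < p.2.1 ∧ p.2.1 < p.2.2),
        G p := by
    apply Finset.sum_congr _ (fun _ _ => rfl)
    apply Finset.filter_congr
    intro p _
    simp only [Fin.lt_def, ne_eq, Fin.ext_iff]
    constructor
    · omega
    · omega
  have hT2 : ∑ x ∈ Finset.filter (fun a : Fin n × Fin n × Fin n =>
        (a.1 ≠ a.2.1 ∧ a.2.1 ≠ a.2.2 ∧ a.1 ≠ a.2.2) ∧ a.1 < a.2.1 ∧ a.2.1 < a.2.2 ∧ ¬ a.1 < a.2.2)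
        Finset.univ, G x = 0 := by
    apply Finset.sum_eq_zero
    intro p hp
    simp only [Finset.mem_filter, Fin.lt_def, ne_eq, Fin.ext_iff] at hp
    omega
  have hT3 : ∑ x ∈ Finset.filter (fun a : Fin n × Fin n × Fin n =>
        (a.1 ≠ a.2.1 ∧ a.2.1 ≠ a.2.2 ∧ a.1 ≠ a.2.2) ∧ a.1 < a.2.1 ∧ ¬ a.2.1 < a.2.2 ∧ a.1 < a.2.2)
        Finset.univ, G x
      = ∑ p ∈ Finset.univ.filter (fun p : Fin n × Fin n × Fin n => p.1 < p.2.1 ∧ p.2.1 < p.2.2),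
        G (p.1, p.2.2, p.2.1) := by
    apply Finset.sum_nbij' (fun p : Fin n × Fin n × Fin n => (p.1, p.2.2, p.2.1))
      (fun p : Fin n × Fin n × Fin n => (p.1, p.2.2, p.2.1)) <;>
      intro p hp <;>
      simp only [Finset.mem_filter, Finset.mem_univ, true_and, Fin.lt_def, ne_eq,
        Fin.ext_iff] at * <;>
      first | omega | rfl
  have hT4 : ∑ x ∈ Finset.filter (fun a : Fin n × Fin n × Fin n =>
        (a.1 ≠ a.2.1 ∧ a.2.1 ≠ a.2.2 ∧ a.1 ≠ a.2.2) ∧ a.1 < a.2.1 ∧ ¬ a.2.1 < a.2.2 ∧ ¬ a.1 < a.2.2)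
        Finset.univ, G x
      = ∑ p ∈ Finset.univ.filter (fun p : Fin n × Fin n × Fin n => p.1 < p.2.1 ∧ p.2.1 < p.2.2),
        G (p.2.1, p.2.2, p.1) := by
    apply Finset.sum_nbij' (fun p : Fin n × Fin n × Fin n => (p.2.2, p.1, p.2.1))
      (fun p : Fin n × Fin n × Fin n => (p.2.1, p.2.2, p.1)) <;>
      intro p hp <;>
      simp only [Finset.mem_filter, Finset.mem_univ, true_and, Fin.lt_def, ne_eq,
        Fin.ext_iff] at * <;>
      first | omega | rfl
  have hT5 : ∑ x ∈ Finset.filter (fun a : Fin n × Fin n × Fin n =>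
        (a.1 ≠ a.2.1 ∧ a.2.1 ≠ a.2.2 ∧ a.1 ≠ a.2.2) ∧ ¬ a.1 < a.2.1 ∧ a.2.1 < a.2.2 ∧ a.1 < a.2.2)
        Finset.univ, G x
      = ∑ p ∈ Finset.univ.filter (fun p : Fin n × Fin n × Fin n => p.1 < p.2.1 ∧ p.2.1 < p.2.2),
        G (p.2.1, p.1, p.2.2) := by
    apply Finset.sum_nbij' (fun p : Fin n × Fin n × Fin n => (p.2.1, p.1, p.2.2))
      (fun p : Fin n × Fin n × Fin n => (p.2.1, p.1, p.2.2)) <;>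
      intro p hp <;>
      simp only [Finset.mem_filter, Finset.mem_univ, true_and, Fin.lt_def, ne_eq,
        Fin.ext_iff] at * <;>
      first | omega | rfl
  have hT6 : ∑ x ∈ Finset.filter (fun a : Fin n × Fin n × Fin n =>
        (a.1 ≠ a.2.1 ∧ a.2.1 ≠ a.2.2 ∧ a.1 ≠ a.2.2) ∧ ¬ a.1 < a.2.1 ∧ a.2.1 < a.2.2 ∧ ¬ a.1 < a.2.2)
        Finset.univ, G x
      = ∑ p ∈ Finset.univ.filter (fun p : Fin n × Fin n × Fin n => p.1 < p.2.1 ∧ p.2.1 < p.2.2),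
        G (p.2.2, p.1, p.2.1) := by
    apply Finset.sum_nbij' (fun p : Fin n × Fin n × Fin n => (p.2.1, p.2.2, p.1))
      (fun p : Fin n × Fin n × Fin n => (p.2.2, p.1, p.2.1)) <;>
      intro p hp <;>
      simp only [Finset.mem_filter, Finset.mem_univ, true_and, Fin.lt_def, ne_eq,
        Fin.ext_iff] at * <;>
      first | omega | rfl
  have hT7 : ∑ x ∈ Finset.filter (fun a : Fin n × Fin n × Fin n =>
        (a.1 ≠ a.2.1 ∧ a.2.1 ≠ a.2.2 ∧ a.1 ≠ a.2.2) ∧ ¬ a.1 < a.2.1 ∧ ¬ a.2.1 < a.2.2 ∧ a.1 < a.2.2)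
        Finset.univ, G x = 0 := by
    apply Finset.sum_eq_zero
    intro p hp
    simp only [Finset.mem_filter, Fin.lt_def, ne_eq, Fin.ext_iff] at hp
    omega
  have hT8 : ∑ x ∈ Finset.filter (fun a : Fin n × Fin n × Fin n =>
        (a.1 ≠ a.2.1 ∧ a.2.1 ≠ a.2.2 ∧ a.1 ≠ a.2.2) ∧ ¬ a.1 < a.2.1 ∧ ¬ a.2.1 < a.2.2 ∧ ¬ a.1 < a.2.2)
        Finset.univ, G x
      = ∑ p ∈ Finset.univ.filter (fun p : Fin n × Fin n × Fin n => p.1 < p.2.1 ∧ p.2.1 < p.2.2),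
        G (p.2.2, p.2.1, p.1) := by
    apply Finset.sum_nbij' (fun p : Fin n × Fin n × Fin n => (p.2.2, p.2.1, p.1))
      (fun p : Fin n × Fin n × Fin n => (p.2.2, p.2.1, p.1)) <;>
      intro p hp <;>
      simp only [Finset.mem_filter, Finset.mem_univ, true_and, Fin.lt_def, ne_eq,
        Fin.ext_iff] at * <;>
      first | omega | rfl
  rw [hT1, hT2, hT3, hT4, hT5, hT6, hT7, hT8]
  simp only [add_zero, zero_add]

/-- For an oriented graph `D` with Hermitian adjacency matrix `H = H_{π/3}(D)`,
`trace (H ^ 3) = 3 t₀ - 6 t₁`, where `t₀` is the number of transitive triangles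
and `t₁` is the number of directed triangles. Triangles are counted as ordered
triples `u < v < w` of mutually adjacent vertices. -/
theorem stmt_4 (n : ℕ) (arc : Fin n → Fin n → Prop) [DecidableRel arc]
    (hasym : ∀ u v, arc u v → ¬ arc v u)
    (H : Matrix (Fin n) (Fin n) ℂ)
    (hH : ∀ u v, H u v =
      if arc u v then Complex.exp ((Real.pi / 3 : ℝ) * Complex.I)
      else if arc v u then Complex.exp (-((Real.pi / 3 : ℝ) * Complex.I)) else 0)
    (t₀ t₁ : ℕ)
    (ht₁ : t₁ = (Finset.univ.filter (fun p : Fin n × Fin n × Fin n =>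
      p.1 < p.2.1 ∧ p.2.1 < p.2.2 ∧
      ((arc p.1 p.2.1 ∧ arc p.2.1 p.2.2 ∧ arc p.2.2 p.1) ∨
       (arc p.2.1 p.1 ∧ arc p.2.2 p.2.1 ∧ arc p.1 p.2.2)))).card)
    (ht₀ : t₀ = (Finset.univ.filter (fun p : Fin n × Fin n × Fin n =>
      p.1 < p.2.1 ∧ p.2.1 < p.2.2 ∧
      (arc p.1 p.2.1 ∨ arc p.2.1 p.1) ∧ (arc p.2.1 p.2.2 ∨ arc p.2.2 p.2.1) ∧
      (arc p.1 p.2.2 ∨ arc p.2.2 p.1) ∧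
      ¬ ((arc p.1 p.2.1 ∧ arc p.2.1 p.2.2 ∧ arc p.2.2 p.1) ∨
         (arc p.2.1 p.1 ∧ arc p.2.2 p.2.1 ∧ arc p.1 p.2.2)))).card) :
    Matrix.trace (H ^ 3) = 3 * (t₀ : ℂ) - 6 * (t₁ : ℂ) := by
  classical
  set a : ℂ := Complex.exp ((Real.pi / 3 : ℝ) * Complex.I) with ha
  set b : ℂ := Complex.exp (-((Real.pi / 3 : ℝ) * Complex.I)) with hb
  have hab : a * b = 1 := by rw [ha, hb, ← Complex.exp_add]; simp
  have habs : a + b = 1 := by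
    rw [ha, hb]
    rw [show -(((Real.pi/3:ℝ):ℂ) * Complex.I) = ((-(Real.pi/3):ℝ):ℂ) * Complex.I by
      push_cast; ring]
    rw [Complex.exp_mul_I, Complex.exp_mul_I]
    rw [← Complex.ofReal_cos, ← Complex.ofReal_sin, ← Complex.ofReal_cos, ← Complex.ofReal_sin]
    rw [Real.cos_neg, Real.sin_neg, Real.cos_pi_div_three]
    push_cast; ring
  have ha3 : a ^ 3 = -1 := by
    rw [ha, ← Complex.exp_nat_mul]
    rw [show (3:ℕ) * (((Real.pi/3:ℝ):ℂ) * Complex.I) = (Real.pi:ℝ) * Complex.I by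
      push_cast; ring]
    exact Complex.exp_pi_mul_I
  have hb3 : b ^ 3 = -1 := by
    rw [hb, ← Complex.exp_nat_mul]
    rw [show (3:ℕ) * -(((Real.pi/3:ℝ):ℂ) * Complex.I) = -((Real.pi:ℝ) * Complex.I) by
      push_cast; ring]
    rw [Complex.exp_neg, Complex.exp_pi_mul_I]; norm_num
  have hH' : ∀ u v, H u v = if arc u v then a else if arc v u then b else 0 := hH
  have hdiag : ∀ x y : Fin n, x = y → H x y = 0 := by
    intro x y hxy
    subst hxy
    rw [hH' x x]
    have : ¬ arc x x := fun h => hasym x x h h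
    simp [this]
  have step1 : Matrix.trace (H ^ 3)
      = ∑ p : Fin n × Fin n × Fin n, H p.1 p.2.1 * H p.2.1 p.2.2 * H p.2.2 p.1 := by
    rw [show H ^ 3 = H * H * H by rw [pow_succ, pow_two]]
    rw [Fintype.sum_prod_type]
    simp only [Fintype.sum_prod_type, Matrix.trace, Matrix.diag, Matrix.mul_apply,
      Finset.sum_mul]
    exact Finset.sum_congr rfl fun i _ => Finset.sum_comm
  rw [step1]
  rw [split6 (fun p => H p.1 p.2.1 * H p.2.1 p.2.2 * H p.2.2 p.1) (by
    intro p hp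
    rcases hp with h | h | h
    · rw [hdiag _ _ h]; ring
    · rw [hdiag _ _ h]; ring
    · rw [hdiag _ _ h.symm]; ring)]
  simp only
  rw [Finset.sum_congr rfl
    (fun p _ => sixsum' arc hasym a b hab habs ha3 hb3 H hH' p.1 p.2.1 p.2.2)]
  rw [Finset.sum_sub_distrib, ← Finset.mul_sum, ← Finset.mul_sum, Finset.sum_boole,
    Finset.sum_boole, Finset.filter_filter, Finset.filter_filter]
  rw [ht₀, ht₁]
  have e0 : Finset.filter (fun p : Fin n × Fin n × Fin n =>
      (p.1 < p.2.1 ∧ p.2.1 < p.2.2) ∧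
      (arc p.1 p.2.1 ∨ arc p.2.1 p.1) ∧ (arc p.2.1 p.2.2 ∨ arc p.2.2 p.2.1) ∧
      (arc p.1 p.2.2 ∨ arc p.2.2 p.1) ∧
      ¬ ((arc p.1 p.2.1 ∧ arc p.2.1 p.2.2 ∧ arc p.2.2 p.1) ∨
         (arc p.2.1 p.1 ∧ arc p.2.2 p.2.1 ∧ arc p.1 p.2.2))) Finset.univ
    = Finset.filter (fun p : Fin n × Fin n × Fin n =>
      p.1 < p.2.1 ∧ p.2.1 < p.2.2 ∧
      (arc p.1 p.2.1 ∨ arc p.2.1 p.1) ∧ (arc p.2.1 p.2.2 ∨ arc p.2.2 p.2.1) ∧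
      (arc p.1 p.2.2 ∨ arc p.2.2 p.1) ∧
      ¬ ((arc p.1 p.2.1 ∧ arc p.2.1 p.2.2 ∧ arc p.2.2 p.1) ∨
         (arc p.2.1 p.1 ∧ arc p.2.2 p.2.1 ∧ arc p.1 p.2.2))) Finset.univ := by
    apply Finset.filter_congr
    intro p _
    tauto
  have e1 : Finset.filter (fun p : Fin n × Fin n × Fin n =>
      (p.1 < p.2.1 ∧ p.2.1 < p.2.2) ∧
      ((arc p.1 p.2.1 ∧ arc p.2.1 p.2.2 ∧ arc p.2.2 p.1) ∨
       (arc p.2.1 p.1 ∧ arc p.2.2 p.2.1 ∧ arc p.1 p.2.2))) Finset.univ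
    = Finset.filter (fun p : Fin n × Fin n × Fin n =>
      p.1 < p.2.1 ∧ p.2.1 < p.2.2 ∧
      ((arc p.1 p.2.1 ∧ arc p.2.1 p.2.2 ∧ arc p.2.2 p.1) ∨
       (arc p.2.1 p.1 ∧ arc p.2.2 p.2.1 ∧ arc p.1 p.2.2))) Finset.univ := by
    apply Finset.filter_congr
    intro p _
    tauto
  rw [e0, e1]
end

section
/- Let D be an oriented graph whose Hermitian adjacency matrix H_{π/3}(D) has spectrum symmetric about 0. Then the number of transitive triangles in D equals twice the number of directed triangles in D. -/
/-!
A spectrum symmetric about `0` makes `tr H³ = ∑ λᵢ³` vanish. On the other hand `tr H³` is the sum of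
the products of the entries of `H` around the closed walks of length three, i.e. over the triangles
together with a starting vertex and a direction. With `ω = e^{iπ/3}`, the two directions around a
directed triangle contribute `ω³ + ω̄³ = -2`, those around a transitive triangle
`ω²ω̄ + ωω̄² = ω + ω̄ = 1`. Hence `0 = tr H³ = 3 (t - 2 d)` for `t` transitive and `d` directed
triangles.
-/

open Matrix Finset

section SortedTriples

variable {α M : Type*} [LinearOrder α] [Fintype α] [AddCommMonoid M]

theorem sum_ite_lt_lt_comp_equiv (e : α × α × α ≃ α × α × α) (f : α × α × α → M) :
    ∑ p, (if (e p).1 < (e p).2.1 ∧ (e p).2.1 < (e p).2.2 then f p else 0)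
      = ∑ p : α × α × α with p.1 < p.2.1 ∧ p.2.1 < p.2.2, f (e.symm p) := by
  rw [sum_filter]
  exact Fintype.sum_equiv e _ _ fun p => by simp

theorem sum_triples_eq_sum_sorted (f : α × α × α → M)
    (hf : ∀ a b c, a = b ∨ b = c ∨ a = c → f (a, b, c) = 0) :
    ∑ p, f p = ∑ p : α × α × α with p.1 < p.2.1 ∧ p.2.1 < p.2.2,
      (f (p.1, p.2.1, p.2.2) + f (p.1, p.2.2, p.2.1) + f (p.2.1, p.1, p.2.2)
        + f (p.2.1, p.2.2, p.1) + f (p.2.2, p.1, p.2.1) + f (p.2.2, p.2.1, p.1)) := by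
  -- the `(e i).symm` are the six rearrangements of a triple; for a triple `p` with distinct
  -- entries, exactly one `e i p` is increasing
  let e : Fin 6 → Equiv.Perm (α × α × α) := ![Equiv.refl _,
    ⟨fun p => (p.1, p.2.2, p.2.1), fun p => (p.1, p.2.2, p.2.1), fun _ => rfl, fun _ => rfl⟩,
    ⟨fun p => (p.2.1, p.1, p.2.2), fun p => (p.2.1, p.1, p.2.2), fun _ => rfl, fun _ => rfl⟩,
    ⟨fun p => (p.2.2, p.1, p.2.1), fun p => (p.2.1, p.2.2, p.1), fun _ => rfl, fun _ => rfl⟩,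
    ⟨fun p => (p.2.1, p.2.2, p.1), fun p => (p.2.2, p.1, p.2.1), fun _ => rfl, fun _ => rfl⟩,
    ⟨fun p => (p.2.2, p.2.1, p.1), fun p => (p.2.2, p.2.1, p.1), fun _ => rfl, fun _ => rfl⟩]
  have hsplit : ∀ p, f p = ∑ i, if (e i p).1 < (e i p).2.1 ∧ (e i p).2.1 < (e i p).2.2
      then f p else 0 := by
    rintro ⟨a, b, c⟩
    by_cases hdeg : a = b ∨ b = c ∨ a = c
    · simp [hf a b c hdeg]
    · push Not at hdeg
      obtain ⟨hab, hbc, hac⟩ := hdeg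
      simp only [Fin.sum_univ_six, e]
      rcases hab.lt_or_gt with h₁ | h₁ <;> rcases hbc.lt_or_gt with h₂ | h₂ <;>
        rcases hac.lt_or_gt with h₃ | h₃ <;>
        first | order | simp [h₁, h₂, h₃, h₁.not_gt, h₂.not_gt, h₃.not_gt]
  calc ∑ p, f p
      = ∑ i, ∑ p, if (e i p).1 < (e i p).2.1 ∧ (e i p).2.1 < (e i p).2.2 then f p else 0 := by
        rw [sum_comm]; exact sum_congr rfl fun p _ => hsplit p
    _ = ∑ i, ∑ p : α × α × α with p.1 < p.2.1 ∧ p.2.1 < p.2.2, f ((e i).symm p) := by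
        simp only [sum_ite_lt_lt_comp_equiv]
    _ = _ := by
        rw [sum_comm]
        exact sum_congr rfl fun p _ => by simp [Fin.sum_univ_six, e]

end SortedTriples

namespace Matrix

theorem trace_mul_mul_eq_sum {n R : Type*} [Fintype n] [NonUnitalNonAssocSemiring R]
    (A B C : Matrix n n R) :
    (A * B * C).trace = ∑ p : n × n × n, A p.1 p.2.1 * B p.2.1 p.2.2 * C p.2.2 p.1 := by
  simp only [trace, diag, mul_apply, sum_mul, Fintype.sum_prod_type]
  exact sum_congr rfl fun _ _ => sum_comm

variable {n 𝕜 : Type*} [Fintype n] [DecidableEq n] [RCLike 𝕜] {A : Matrix n n 𝕜}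

theorem IsHermitian.trace_pow_eq_sum_eigenvalues_pow (hA : A.IsHermitian) (k : ℕ) :
    (A ^ k).trace = ∑ i, (hA.eigenvalues i : 𝕜) ^ k := by
  conv_lhs => rw [hA.spectral_theorem, ← map_pow, Unitary.conjStarAlgAut_apply, trace_mul_cycle,
    Unitary.coe_star_mul_self, one_mul, diagonal_pow, trace_diagonal]
  rfl

theorem IsHermitian.trace_pow_eq_zero_of_odd (hA : A.IsHermitian) (σ : Equiv.Perm n)
    (hσ : ∀ i, hA.eigenvalues (σ i) = -hA.eigenvalues i) {k : ℕ} (hk : Odd k) :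
    (A ^ k).trace = 0 := by
  have hneg : ∑ i, hA.eigenvalues i ^ k = -∑ i, hA.eigenvalues i ^ k := by
    calc ∑ i, hA.eigenvalues i ^ k = ∑ i, hA.eigenvalues (σ i) ^ k := (Equiv.sum_comp σ _).symm
      _ = -∑ i, hA.eigenvalues i ^ k := by simp [hσ, hk.neg_pow]
  rw [hA.trace_pow_eq_sum_eigenvalues_pow]
  exact_mod_cast self_eq_neg.mp hneg

end Matrix

namespace Complex

theorem exp_pi_div_three_mul_I_add_exp_neg :
    exp ((Real.pi / 3 : ℝ) * I) + exp (-((Real.pi / 3 : ℝ) * I)) = 1 := by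
  rw [← neg_mul, ← two_cos, ← ofReal_cos, Real.cos_pi_div_three]
  norm_num

theorem exp_pi_div_three_mul_I_mul_exp_neg :
    exp ((Real.pi / 3 : ℝ) * I) * exp (-((Real.pi / 3 : ℝ) * I)) = 1 := by
  rw [← exp_add, add_neg_cancel, exp_zero]

end Complex

theorem pow_three_add_pow_three_of_mul_eq_one_of_add_eq_one {R : Type*} [CommRing R] {z w : R}
    (hmul : z * w = 1) (hsum : z + w = 1) : z ^ 3 + w ^ 3 = -2 := by
  linear_combination ((z + w) ^ 2 + (z + w) - 2) * hsum - 3 * (z + w) * hmul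

section OrientedGraph

variable {V R : Type*} (arc : V → V → Prop)

def IsDirectedTriangle (a b c : V) : Prop :=
  (arc a b ∧ arc b c ∧ arc c a) ∨ (arc b a ∧ arc c b ∧ arc a c)

def IsTransitiveTriangle (a b c : V) : Prop :=
  (arc a b ∨ arc b a) ∧ (arc b c ∨ arc c b) ∧ (arc a c ∨ arc c a) ∧ ¬IsDirectedTriangle arc a b c

variable [DecidableRel arc]

instance (a b c : V) : Decidable (IsDirectedTriangle arc a b c) :=
  inferInstanceAs (Decidable (_ ∨ _))

instance (a b c : V) : Decidable (IsTransitiveTriangle arc a b c) :=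
  inferInstanceAs (Decidable (_ ∧ _))

variable [CommRing R] {arc} {H : Matrix V V R} {z w : R}

theorem cycle_add_reverse_cycle_eq (hasym : ∀ u v, arc u v → ¬arc v u)
    (hH : ∀ u v, H u v = if arc u v then z else if arc v u then w else 0) (a b c : V) :
    H a b * H b c * H c a + H a c * H c b * H b a =
      (if IsTransitiveTriangle arc a b c then z * w * (z + w) else 0)
        + (if IsDirectedTriangle arc a b c then z ^ 3 + w ^ 3 else 0) := by
  have hab := hasym a b
  have hbc := hasym b c
  have hac := hasym a c
  by_cases h₁ : arc a b <;> by_cases h₁' : arc b a <;>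
    by_cases h₂ : arc b c <;> by_cases h₂' : arc c b <;>
    by_cases h₃ : arc a c <;> by_cases h₃' : arc c a <;>
    simp_all [IsTransitiveTriangle, IsDirectedTriangle] <;> ring

theorem trace_pow_three_eq_triangle_count [Fintype V] [LinearOrder V]
    (hasym : ∀ u v, arc u v → ¬arc v u)
    (hH : ∀ u v, H u v = if arc u v then z else if arc v u then w else 0) :
    (H ^ 3).trace =
      3 * (#{p : V × V × V | p.1 < p.2.1 ∧ p.2.1 < p.2.2 ∧
              IsTransitiveTriangle arc p.1 p.2.1 p.2.2} * (z * w * (z + w))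
        + #{p : V × V × V | p.1 < p.2.1 ∧ p.2.1 < p.2.2 ∧
              IsDirectedTriangle arc p.1 p.2.1 p.2.2} * (z ^ 3 + w ^ 3)) := by
  have hdiag (u : V) : H u u = 0 := by
    have hu : ¬arc u u := fun h => hasym u u h h
    simp [hH, hu]
  rw [pow_three', trace_mul_mul_eq_sum, sum_triples_eq_sum_sorted]
  · calc _ = ∑ p : V × V × V with p.1 < p.2.1 ∧ p.2.1 < p.2.2,
            3 * ((if IsTransitiveTriangle arc p.1 p.2.1 p.2.2 then z * w * (z + w) else 0)
              + (if IsDirectedTriangle arc p.1 p.2.1 p.2.2 then z ^ 3 + w ^ 3 else 0)) := by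
          refine sum_congr rfl fun p _ => ?_
          rw [← cycle_add_reverse_cycle_eq hasym hH]
          ring
      _ = _ := by
          rw [← mul_sum, sum_add_distrib, ← sum_filter, ← sum_filter, sum_const, sum_const,
            filter_filter, filter_filter, nsmul_eq_mul, nsmul_eq_mul]
          simp only [and_assoc]
  · rintro a b c (rfl | rfl | rfl) <;> simp [hdiag]

end OrientedGraph

/-- If an oriented graph `D` has `H_{π/3}(D)` with spectrum symmetric about 0,
then the number of transitive triangles equals twice the number of directed
triangles. -/
theorem stmt_5 (n : ℕ) (arc : Fin n → Fin n → Prop) [DecidableRel arc]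
    (hasym : ∀ u v, arc u v → ¬ arc v u)
    (H : Matrix (Fin n) (Fin n) ℂ)
    (hH : ∀ u v, H u v =
      if arc u v then Complex.exp ((Real.pi / 3 : ℝ) * Complex.I)
      else if arc v u then Complex.exp (-((Real.pi / 3 : ℝ) * Complex.I)) else 0)
    (hHerm : H.IsHermitian)
    (hsym : ∃ σ : Equiv.Perm (Fin n), ∀ i, hHerm.eigenvalues (σ i) = - hHerm.eigenvalues i) :
    (Finset.univ.filter (fun p : Fin n × Fin n × Fin n =>
      p.1 < p.2.1 ∧ p.2.1 < p.2.2 ∧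
      (arc p.1 p.2.1 ∨ arc p.2.1 p.1) ∧ (arc p.2.1 p.2.2 ∨ arc p.2.2 p.2.1) ∧
      (arc p.1 p.2.2 ∨ arc p.2.2 p.1) ∧
      ¬ ((arc p.1 p.2.1 ∧ arc p.2.1 p.2.2 ∧ arc p.2.2 p.1) ∨
         (arc p.2.1 p.1 ∧ arc p.2.2 p.2.1 ∧ arc p.1 p.2.2)))).card
    = 2 * (Finset.univ.filter (fun p : Fin n × Fin n × Fin n =>
      p.1 < p.2.1 ∧ p.2.1 < p.2.2 ∧
      ((arc p.1 p.2.1 ∧ arc p.2.1 p.2.2 ∧ arc p.2.2 p.1) ∨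
       (arc p.2.1 p.1 ∧ arc p.2.2 p.2.1 ∧ arc p.1 p.2.2)))).card := by
  obtain ⟨σ, hσ⟩ := hsym
  have htrace := hHerm.trace_pow_eq_zero_of_odd σ hσ (by decide : Odd 3)
  have hmul := Complex.exp_pi_div_three_mul_I_mul_exp_neg
  have hsum := Complex.exp_pi_div_three_mul_I_add_exp_neg
  rw [trace_pow_three_eq_triangle_count hasym hH,
    pow_three_add_pow_three_of_mul_eq_one_of_add_eq_one hmul hsum, hmul, hsum] at htrace
  change #{p : Fin n × Fin n × Fin n | p.1 < p.2.1 ∧ p.2.1 < p.2.2 ∧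
      IsTransitiveTriangle arc p.1 p.2.1 p.2.2}
    = 2 * #{p : Fin n × Fin n × Fin n | p.1 < p.2.1 ∧ p.2.1 < p.2.2 ∧
      IsDirectedTriangle arc p.1 p.2.1 p.2.2}
  refine Nat.cast_injective (R := ℂ) ?_
  push_cast
  linear_combination htrace / 3
end

section
/- If an undirected graph G admits an orientation D such that H_{π/3}(D) has spectrum symmetric about 0, then the total number of triangles of G is divisible by 3. -/
open Matrix Finset

lemma omega_eq : Complex.exp ((Real.pi / 3 : ℝ) * Complex.I)
    = 1/2 + (Real.sqrt 3)/2 * Complex.I := by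
  rw [Complex.exp_mul_I, ← Complex.ofReal_cos, ← Complex.ofReal_sin,
      Real.cos_pi_div_three, Real.sin_pi_div_three]
  push_cast; ring

lemma omega'_eq : Complex.exp (-((Real.pi / 3 : ℝ) * Complex.I))
    = 1 - Complex.exp ((Real.pi / 3 : ℝ) * Complex.I) := by
  rw [omega_eq, show -((Real.pi/3:ℝ) * Complex.I) = ((-(Real.pi/3):ℝ):ℂ) * Complex.I by
    push_cast; ring, Complex.exp_mul_I, ← Complex.ofReal_cos, ← Complex.ofReal_sin,
    Real.cos_neg, Real.sin_neg, Real.cos_pi_div_three, Real.sin_pi_div_three]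
  push_cast; ring

lemma omega_sq : Complex.exp ((Real.pi / 3 : ℝ) * Complex.I)^2
    = Complex.exp ((Real.pi / 3 : ℝ) * Complex.I) - 1 := by
  have hs : ((Real.sqrt 3 : ℝ) : ℂ)^2 = 3 := by
    rw [← Complex.ofReal_pow]; norm_cast
    exact Real.sq_sqrt (by norm_num)
  rw [omega_eq]
  linear_combination ((((Real.sqrt 3:ℝ):ℂ))^2/4) * Complex.I_sq - (1/4) * hs

lemma triple_eq_iff {α : Type*} [DecidableEq α] {a b c i j k : α}
    (hab : a ≠ b) (hac : a ≠ c) (hbc : b ≠ c) :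
    ({i, j, k} : Finset α) = {a, b, c} ↔
      (i,j,k) = (a,b,c) ∨ (i,j,k) = (a,c,b) ∨ (i,j,k) = (b,a,c) ∨
      (i,j,k) = (b,c,a) ∨ (i,j,k) = (c,a,b) ∨ (i,j,k) = (c,b,a) := by
  constructor
  · intro h
    have hcard : ({i, j, k} : Finset α).card = 3 := by
      rw [h]
      rw [Finset.card_insert_of_notMem (by simp [hab, hac]),
          Finset.card_insert_of_notMem (by simp [hbc]), Finset.card_singleton]
    have hle : ∀ (x y : α), ({x, y} : Finset α).card ≤ 2 :=
      fun x y => le_trans (Finset.card_insert_le _ _) (by simp)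
    have hij : i ≠ j := by
      rintro rfl
      rw [show ({i, i, k} : Finset α) = {i, k} by ext x; simp; try tauto] at hcard
      have := hle i k; omega
    have hik : i ≠ k := by
      rintro rfl
      rw [show ({i, j, i} : Finset α) = {i, j} by ext x; simp; try tauto] at hcard
      have := hle i j; omega
    have hjk : j ≠ k := by
      rintro rfl
      rw [show ({i, j, j} : Finset α) = {i, j} by ext x; simp; try tauto] at hcard
      have := hle i j; omega
    have hi : i ∈ ({a,b,c} : Finset α) := by rw [← h]; simp
    have hj : j ∈ ({a,b,c} : Finset α) := by rw [← h]; simp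
    have hk : k ∈ ({a,b,c} : Finset α) := by rw [← h]; simp
    simp only [Finset.mem_insert, Finset.mem_singleton] at hi hj hk
    rcases hi with rfl|rfl|rfl <;> rcases hj with rfl|rfl|rfl <;>
      rcases hk with rfl|rfl|rfl <;> simp_all
  · rintro (h|h|h|h|h|h) <;> rw [Prod.ext_iff, Prod.ext_iff] at h <;>
      obtain ⟨rfl, rfl, rfl⟩ := h <;> (first | rfl | (ext x; simp; tauto))

lemma six_sum (n : ℕ) (G : SimpleGraph (Fin n)) [DecidableRel G.Adj]
    (arc : Fin n → Fin n → Prop) [DecidableRel arc]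
    (hasym : ∀ u v, arc u v → ¬ arc v u)
    (horient : ∀ u v, G.Adj u v ↔ (arc u v ∨ arc v u))
    (H : Matrix (Fin n) (Fin n) ℂ)
    (hH : ∀ u v, H u v =
      if arc u v then Complex.exp ((Real.pi / 3 : ℝ) * Complex.I)
      else if arc v u then Complex.exp (-((Real.pi / 3 : ℝ) * Complex.I)) else 0)
    (a b c : Fin n) (hab : G.Adj a b) (hac : G.Adj a c) (hbc : G.Adj b c) :
    (H a b * H b c * H c a) + (H a c * H c b * H b a) + (H b a * H a c * H c b) +
    (H b c * H c a * H a b) + (H c a * H a b * H b c) + (H c b * H b a * H a c) = 3 ∨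
    (H a b * H b c * H c a) + (H a c * H c b * H b a) + (H b a * H a c * H c b) +
    (H b c * H c a * H a b) + (H c a * H a b * H b c) + (H c b * H b a * H a c) = -6 := by
  rcases (horient a b).mp hab with h1 | h1 <;>
  rcases (horient b c).mp hbc with h2 | h2 <;>
  rcases (horient a c).mp hac with h3 | h3 <;>
  simp only [hH, hasym _ _ h1, hasym _ _ h2, hasym _ _ h3, h1, h2, h3,
    if_true, if_false, ite_true, ite_false, eq_self_iff_true, not_false_iff] <;>
  first
    | (left; simp only [omega'_eq]; linear_combination (-3 : ℂ) * omega_sq)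
    | (right; simp only [omega'_eq]; linear_combination (9 : ℂ) * omega_sq)

/-- If a simple graph `G` admits an orientation whose Hermitian adjacency matrix
`H_{π/3}` has spectrum symmetric about 0, then the number of triangles of `G`
is divisible by 3. -/
theorem stmt_6 (n : ℕ) (G : SimpleGraph (Fin n)) [DecidableRel G.Adj]
    (arc : Fin n → Fin n → Prop) [DecidableRel arc]
    (hasym : ∀ u v, arc u v → ¬ arc v u)
    (horient : ∀ u v, G.Adj u v ↔ (arc u v ∨ arc v u))
    (H : Matrix (Fin n) (Fin n) ℂ)
    (hH : ∀ u v, H u v =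
      if arc u v then Complex.exp ((Real.pi / 3 : ℝ) * Complex.I)
      else if arc v u then Complex.exp (-((Real.pi / 3 : ℝ) * Complex.I)) else 0)
    (hHerm : H.IsHermitian)
    (hsym : ∃ σ : Equiv.Perm (Fin n), ∀ i, hHerm.eigenvalues (σ i) = - hHerm.eigenvalues i) :
    3 ∣ (G.cliqueFinset 3).card := by
  classical
  obtain ⟨σ, hσ⟩ := hsym
  -- Step 1: trace (H³) = 0
  have htr0 : (H*H*H).trace = 0 := by
    have hsum0 : ∑ i, (hHerm.eigenvalues i)^3 = 0 := by
      have h1 := Equiv.sum_comp σ (fun i => (hHerm.eigenvalues i)^3)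
      have h2 : ∑ i, (hHerm.eigenvalues (σ i))^3 = -∑ i, (hHerm.eigenvalues i)^3 := by
        rw [← Finset.sum_neg_distrib]
        exact Finset.sum_congr rfl fun i _ => by rw [hσ]; ring
      rw [h2] at h1; linarith
    set U : Matrix (Fin n) (Fin n) ℂ := (hHerm.eigenvectorUnitary : Matrix (Fin n) (Fin n) ℂ)
      with hUdef
    set D : Matrix (Fin n) (Fin n) ℂ :=
      Matrix.diagonal (RCLike.ofReal ∘ hHerm.eigenvalues) with hDdef
    have hspec : H = U * D * star U := hHerm.spectral_theorem
    have hU' : star U * U = 1 := Matrix.mem_unitaryGroup_iff'.mp hHerm.eigenvectorUnitary.2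
    have cancel : ∀ M : Matrix (Fin n) (Fin n) ℂ, star U * (U * M) = M := by
      intro M; rw [← Matrix.mul_assoc, hU', Matrix.one_mul]
    have h3 : H*H*H = U * (D*D*D) * star U := by
      rw [hspec]
      simp only [Matrix.mul_assoc, cancel]
    rw [h3, Matrix.trace_mul_comm (U * (D*D*D)) (star U), ← Matrix.mul_assoc, hU',
      Matrix.one_mul]
    rw [hDdef, Matrix.diagonal_mul_diagonal, Matrix.diagonal_mul_diagonal,
      Matrix.trace_diagonal]
    have key : ∀ i, ((RCLike.ofReal ∘ hHerm.eigenvalues : Fin n → ℂ) i) *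
        ((RCLike.ofReal ∘ hHerm.eigenvalues : Fin n → ℂ) i) *
        ((RCLike.ofReal ∘ hHerm.eigenvalues : Fin n → ℂ) i)
        = ((hHerm.eigenvalues i : ℝ) : ℂ)^3 := by
      intro i; simp [RCLike.ofReal]; ring
    simp only [key]
    rw [show (0:ℂ) = ((0:ℝ):ℂ) by norm_num, ← hsum0]
    push_cast; ring
  -- Step 2: expand the trace as a sum over ordered triples
  set f : Fin n × Fin n × Fin n → ℂ :=
    fun t => H t.1 t.2.1 * H t.2.1 t.2.2 * H t.2.2 t.1 with hf
  have hexp : (H*H*H).trace = ∑ t : Fin n × Fin n × Fin n, f t := by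
    rw [Matrix.trace]
    simp only [Matrix.diag_apply, Matrix.mul_apply, Finset.sum_mul, Fintype.sum_prod_type, hf]
    exact Finset.sum_congr rfl fun i _ => Finset.sum_comm
  -- Step 3: terms not coming from triangles vanish
  have hadj : ∀ u v, H u v ≠ 0 → G.Adj u v := by
    intro u v huv
    by_cases h1 : arc u v
    · exact (horient u v).mpr (Or.inl h1)
    by_cases h2 : arc v u
    · exact (horient u v).mpr (Or.inr h2)
    · exact absurd (by simp [hH, h1, h2]) huv
  have hzero : ∀ t : Fin n × Fin n × Fin n,
      ({t.1, t.2.1, t.2.2} : Finset (Fin n)) ∉ G.cliqueFinset 3 → f t = 0 := by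
    rintro ⟨i, j, k⟩ hmem
    by_contra hne
    apply hmem
    have h1 : G.Adj i j := hadj _ _ (fun h => hne (by simp [hf, h]))
    have h2 : G.Adj j k := hadj _ _ (fun h => hne (by simp [hf, h]))
    have h3 : G.Adj k i := hadj _ _ (fun h => hne (by simp [hf, h]))
    rw [SimpleGraph.mem_cliqueFinset_iff]
    exact SimpleGraph.is3Clique_triple_iff.mpr ⟨h1, h3.symm, h2⟩
  -- Step 4: group the sum over triangles
  have e1 : ∑ t ∈ Finset.univ.filter
      (fun t : Fin n × Fin n × Fin n =>
        ({t.1, t.2.1, t.2.2} : Finset (Fin n)) ∈ G.cliqueFinset 3), f t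
      = ∑ t : Fin n × Fin n × Fin n, f t :=
    Finset.sum_filter_of_ne (fun t _ h => by by_contra hm; exact h (hzero t hm))
  have e2 := Finset.sum_fiberwise_of_maps_to
    (s := Finset.univ.filter (fun t : Fin n × Fin n × Fin n =>
      ({t.1, t.2.1, t.2.2} : Finset (Fin n)) ∈ G.cliqueFinset 3))
    (t := G.cliqueFinset 3)
    (g := fun t : Fin n × Fin n × Fin n => ({t.1, t.2.1, t.2.2} : Finset (Fin n)))
    (fun t ht => (Finset.mem_filter.mp ht).2) f
  have e3 : ∀ T ∈ G.cliqueFinset 3,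
      (Finset.univ.filter (fun t : Fin n × Fin n × Fin n =>
        ({t.1, t.2.1, t.2.2} : Finset (Fin n)) ∈ G.cliqueFinset 3)).filter
        (fun t => ({t.1, t.2.1, t.2.2} : Finset (Fin n)) = T)
      = Finset.univ.filter (fun t : Fin n × Fin n × Fin n =>
        ({t.1, t.2.1, t.2.2} : Finset (Fin n)) = T) := by
    intro T hT
    ext t
    simp only [Finset.mem_filter, Finset.mem_univ, true_and]
    exact ⟨fun h => h.2, fun h => ⟨h ▸ hT, h⟩⟩
  have hmaineq : ∑ T ∈ G.cliqueFinset 3,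
      (∑ t ∈ Finset.univ.filter (fun t : Fin n × Fin n × Fin n =>
        ({t.1, t.2.1, t.2.2} : Finset (Fin n)) = T), f t) = 0 := by
    rw [← htr0, hexp, ← e1, ← e2]
    exact Finset.sum_congr rfl fun T hT => by rw [e3 T hT]
  -- Step 5: each triangle contributes 3 or -6
  set w : Finset (Fin n) → ℂ := fun T =>
    ∑ t ∈ Finset.univ.filter (fun t : Fin n × Fin n × Fin n =>
      ({t.1, t.2.1, t.2.2} : Finset (Fin n)) = T), f t with hw
  have hval : ∀ T ∈ G.cliqueFinset 3, w T = 3 ∨ w T = -6 := by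
    intro T hT
    obtain ⟨a, b, c, hab, hac, hbc, rfl⟩ :=
      SimpleGraph.is3Clique_iff.mp (SimpleGraph.mem_cliqueFinset_iff.mp hT)
    have hne1 : a ≠ b := hab.ne
    have hne2 : a ≠ c := hac.ne
    have hne3 : b ≠ c := hbc.ne
    have hfib : Finset.univ.filter (fun t : Fin n × Fin n × Fin n =>
        ({t.1, t.2.1, t.2.2} : Finset (Fin n)) = {a, b, c})
        = ({(a,b,c),(a,c,b),(b,a,c),(b,c,a),(c,a,b),(c,b,a)} :
            Finset (Fin n × Fin n × Fin n)) := by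
      ext ⟨i, j, k⟩
      simp only [Finset.mem_filter, Finset.mem_univ, true_and, Finset.mem_insert,
        Finset.mem_singleton]
      exact triple_eq_iff hne1 hne2 hne3
    have hsum6 : w {a, b, c} = f (a,b,c) + f (a,c,b) + f (b,a,c) + f (b,c,a) +
        f (c,a,b) + f (c,b,a) := by
      rw [hw]
      simp only []
      rw [hfib]
      rw [Finset.sum_insert (by
            simp [Prod.ext_iff, hne1, hne2, hne3, hne1.symm, hne2.symm, hne3.symm]),
          Finset.sum_insert (by
            simp [Prod.ext_iff, hne1, hne2, hne3, hne1.symm, hne2.symm, hne3.symm]),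
          Finset.sum_insert (by
            simp [Prod.ext_iff, hne1, hne2, hne3, hne1.symm, hne2.symm, hne3.symm]),
          Finset.sum_insert (by
            simp [Prod.ext_iff, hne1, hne2, hne3, hne1.symm, hne2.symm, hne3.symm]),
          Finset.sum_insert (by
            simp [Prod.ext_iff, hne1, hne2, hne3, hne1.symm, hne2.symm, hne3.symm]),
          Finset.sum_singleton]
      ring
    rw [hsum6]
    simpa [hf] using six_sum n G arc hasym horient H hH a b c hab hac hbc
  -- Step 6: counting
  set S := G.cliqueFinset 3 with hS
  set S0 := S.filter (fun T => w T = 3) with hS0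
  set S1 := S.filter (fun T => ¬ w T = 3) with hS1
  have hsplit : ∑ T ∈ S0, w T + ∑ T ∈ S1, w T = 0 := by
    rw [hS0, hS1, Finset.sum_filter_add_sum_filter_not]
    exact hmaineq
  have hA : ∑ T ∈ S0, w T = 3 * (S0.card : ℂ) := by
    rw [Finset.sum_congr rfl (fun T hT => (Finset.mem_filter.mp hT).2),
      Finset.sum_const, nsmul_eq_mul, mul_comm]
  have hB : ∑ T ∈ S1, w T = -6 * (S1.card : ℂ) := by
    rw [Finset.sum_congr rfl (fun T hT => by
      have h := Finset.mem_filter.mp hT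
      rcases hval T h.1 with h3 | h6
      · exact absurd h3 h.2
      · exact h6),
      Finset.sum_const, nsmul_eq_mul]
    ring
  have hxy : (S0.card : ℂ) = 2 * (S1.card : ℂ) := by
    rw [hA, hB] at hsplit
    linear_combination hsplit / 3
  have hxy' : S0.card = 2 * S1.card := by exact_mod_cast hxy
  have hcards : S0.card + S1.card = S.card :=
    Finset.card_filter_add_card_filter_not (p := fun T => w T = 3)
  exact ⟨S1.card, by omega⟩
end

section
/- Let n ≥ 3 and let d₁,…,dₙ be nonnegative integers with Σdᵢ = C(n,2) and Σ C(dᵢ,2) = (2/3)·C(n,3). Then n ≤ 11. -/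
lemma c3_cast (m : ℕ) : ((m + 3).choose 3 : ℚ) = (m + 3) * (m + 2) * (m + 1) / 6 := by
  induction m with
  | zero => norm_num [Nat.choose]
  | succ k ih =>
      have h : k + 1 + 3 = (k + 3) + 1 := rfl
      rw [h, Nat.choose_succ_succ (k + 3) 2, Nat.cast_add, ih, Nat.cast_choose_two]
      push_cast
      ring

/-- Numerical core of the tournament bound: if `d₁,…,dₙ` are nonnegative
integers with `∑ dᵢ = C(n,2)` and `∑ C(dᵢ,2) = (2/3) C(n,3)`, then `n ≤ 11`. -/
theorem stmt_8 (n : ℕ) (hn : 3 ≤ n) (d : Fin n → ℕ)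
    (hsum : ∑ i, d i = n.choose 2)
    (hsq : (∑ i, ((d i).choose 2 : ℚ)) = (2 / 3 : ℚ) * (n.choose 3 : ℚ)) :
    n ≤ 11 := by
  obtain ⟨m, rfl⟩ : ∃ m, n = m + 3 := ⟨n - 3, by omega⟩
  -- sum of d in ℚ
  have hsumQ : (∑ i, (d i : ℚ)) = ((m : ℚ) + 3) * ((m : ℚ) + 2) / 2 := by
    have := congrArg (Nat.cast : ℕ → ℚ) hsum
    push_cast at this
    rw [this, Nat.cast_choose_two]
    push_cast
    ring
  -- sum of squares
  have hsqQ : (∑ i, (d i : ℚ) ^ 2)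
      = 2 * (∑ i, ((d i).choose 2 : ℚ)) + ∑ i, (d i : ℚ) := by
    rw [Finset.mul_sum, ← Finset.sum_add_distrib]
    refine Finset.sum_congr rfl fun i _ => ?_
    rw [Nat.cast_choose_two]
    ring
  have hcs := sq_sum_le_card_mul_sum_sq (s := (Finset.univ : Finset (Fin (m + 3))))
      (f := fun i => (d i : ℚ))
  simp only [Finset.card_univ, Fintype.card_fin] at hcs
  rw [hsumQ, hsqQ, hsq, hsumQ, c3_cast] at hcs
  push_cast at hcs
  have hpos : (0 : ℚ) < ((m : ℚ) + 3) ^ 2 * ((m : ℚ) + 2) := by positivity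
  have hcs2 : (9 * ((m : ℚ) + 2)) * (((m : ℚ) + 3) ^ 2 * ((m : ℚ) + 2))
      ≤ (8 * (m : ℚ) + 26) * (((m : ℚ) + 3) ^ 2 * ((m : ℚ) + 2)) := by nlinarith [hcs]
  have hm : (m : ℚ) ≤ 8 := by
    have := le_of_mul_le_mul_right hcs2 hpos
    linarith
  have : m ≤ 8 := by exact_mod_cast hm
  omega
end

section
/- Let L be a graph whose least adjacency eigenvalue satisfies λ_min(A(L)) ≥ −2 (e.g., L is a line graph). If L admits an orientation with symmetric H_{π/3}-spectrum, then the number of triangles of L satisfies t(L) ≤ 6·|E(L)|. -/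
/-!
Write `H = ½ (A + i √3 S)`, where `A` is the adjacency matrix and `S` the skew-symmetric
`±1` matrix of the orientation. A symmetric spectrum makes `tr H³ = ∑ λᵢ³` vanish, and the real
part of `tr (A + i √3 S)³` is `tr A³ - 9 tr (A S²)`, so `6 t(L) ≤ tr A³ = 9 tr (A S²)`.
Since `Sᵀ = -S`, `tr (A S²) = -tr (Sᵀ A S)`, and `Sᵀ (A + 2) S ⪰ 0` because `λ_min(A) ≥ -2`;
hence `tr (A S²) ≤ 2 tr (Sᵀ S) = 4 |E(L)|`.
-/

open Finset Matrix
open scoped ComplexOrder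

namespace Matrix.IsHermitian

variable {𝕜 n : Type*} [RCLike 𝕜] [Fintype n] [DecidableEq n] {A : Matrix n n 𝕜}

lemma trace_pow_eq_sum_eigenvalues_pow_s15 (hA : A.IsHermitian) (k : ℕ) :
    (A ^ k).trace = ∑ i, (hA.eigenvalues i : 𝕜) ^ k := by
  conv_lhs => rw [hA.spectral_theorem]
  rw [← map_pow, Unitary.conjStarAlgAut_apply, trace_mul_cycle, Unitary.coe_star_mul_self,
    one_mul, diagonal_pow, trace_diagonal]
  rfl

lemma trace_pow_eq_zero_of_odd_of_eigenvalues_symm (hA : A.IsHermitian) {k : ℕ} (hk : Odd k)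
    (σ : Equiv.Perm n) (hσ : ∀ i, hA.eigenvalues (σ i) = -hA.eigenvalues i) :
    (A ^ k).trace = 0 := by
  have hsum : ∑ i, hA.eigenvalues i ^ k = 0 := by
    have := Equiv.sum_comp σ (fun i ↦ hA.eigenvalues i ^ k)
    simp only [hσ, hk.neg_pow, sum_neg_distrib] at this
    linarith
  rw [hA.trace_pow_eq_sum_eigenvalues_pow_s15]
  exact_mod_cast congrArg (RCLike.ofReal : ℝ → 𝕜) hsum

lemma posSemidef_add_smul_one (hA : A.IsHermitian) {c : ℝ} (hc : ∀ i, -c ≤ hA.eigenvalues i) :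
    (A + c • (1 : Matrix n n 𝕜)).PosSemidef := by
  have hdiag :
      (diagonal (RCLike.ofReal ∘ hA.eigenvalues) + (c : 𝕜) • 1 : Matrix n n 𝕜).PosSemidef := by
    rw [← diagonal_one, ← diagonal_smul, diagonal_add, posSemidef_diagonal_iff]
    intro i
    have : 0 ≤ hA.eigenvalues i + c := by linarith [hc i]
    simp only [Function.comp_apply, Pi.smul_apply, smul_eq_mul, mul_one]
    exact_mod_cast this
  rw [RCLike.real_smul_eq_coe_smul (K := 𝕜), hA.spectral_theorem,
    ← map_one (Unitary.conjStarAlgAut 𝕜 _ hA.eigenvectorUnitary), ← map_smul, ← map_add,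
    Unitary.conjStarAlgAut_apply]
  exact hdiag.mul_mul_conjTranspose_same _

lemma neg_mul_trace_transpose_mul_le {m : Type*} [Fintype m] {A : Matrix n n ℝ}
    (hA : A.IsHermitian) {c : ℝ} (hc : ∀ i, -c ≤ hA.eigenvalues i) (B : Matrix n m ℝ) :
    -c * (Bᵀ * B).trace ≤ (Bᵀ * A * B).trace := by
  have := ((hA.posSemidef_add_smul_one hc).conjTranspose_mul_mul_same B).trace_nonneg
  rw [conjTranspose_eq_transpose_of_trivial, Matrix.mul_add, Matrix.add_mul, trace_add,
    Matrix.mul_smul, Matrix.smul_mul, Matrix.mul_one, trace_smul, smul_eq_mul] at this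
  linarith

end Matrix.IsHermitian

lemma Matrix.re_trace_pow_three_map_ofReal_add_I_smul {n : Type*} [Fintype n] [DecidableEq n]
    (X Y : Matrix n n ℝ) :
    ((X.map (↑) + Complex.I • Y.map (↑) : Matrix n n ℂ) ^ 3).trace.re =
      (X ^ 3).trace - 3 * (X * Y * Y).trace := by
  have hmap (Z W : Matrix n n ℝ) : Z.map (↑) * W.map (↑) = (Z * W).map ((↑) : ℝ → ℂ) :=
    (Matrix.map_mul (f := Complex.ofRealHom)).symm
  have htrace (Z : Matrix n n ℝ) : (Z.map ((↑) : ℝ → ℂ)).trace = Z.trace :=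
    (AddMonoidHom.map_trace Complex.ofRealHom Z).symm
  have hYYX : (Y * (Y * X)).trace = (X * (Y * Y)).trace := by rw [← mul_assoc, trace_mul_comm]
  have hYXY : (Y * (X * Y)).trace = (X * (Y * Y)).trace := by rw [trace_mul_comm, mul_assoc]
  simp only [pow_three, add_mul, mul_add, smul_mul_assoc, mul_smul_comm, hmap, trace_add,
    trace_smul, htrace, smul_eq_mul, Complex.add_re, Complex.mul_re, Complex.mul_im,
    Complex.ofReal_re, Complex.ofReal_im, Complex.I_re, Complex.I_im, hYYX, hYXY, mul_assoc]
  ring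

namespace SimpleGraph

variable {V : Type*} [Fintype V] [DecidableEq V] (G : SimpleGraph V) [DecidableRel G.Adj]

def triangleTriples : Finset (V × V × V) :=
  {p | G.Adj p.1 p.2.1 ∧ G.Adj p.2.1 p.2.2 ∧ G.Adj p.2.2 p.1}

omit [DecidableEq V] in
variable {G} in
@[simp] lemma mem_triangleTriples {a b c : V} :
    (a, b, c) ∈ G.triangleTriples ↔ G.Adj a b ∧ G.Adj b c ∧ G.Adj c a := by
  simp [triangleTriples]

lemma trace_adjMatrix_pow_three (R : Type*) [Semiring R] :
    (G.adjMatrix R ^ 3).trace = #G.triangleTriples := by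
  simp only [pow_three, Matrix.trace, Matrix.diag, Matrix.mul_apply, mul_sum]
  rw [triangleTriples, natCast_card_filter, ← univ_product_univ, sum_product,
    ← univ_product_univ]
  refine sum_congr rfl fun i _ ↦ ?_
  rw [sum_product]
  refine sum_congr rfl fun j _ ↦ sum_congr rfl fun k _ ↦ ?_
  by_cases hij : G.Adj i j <;> by_cases hjk : G.Adj j k <;> by_cases hki : G.Adj k i <;>
    simp [hij, hjk, hki]

lemma six_mul_card_cliqueFinset_three_le : 6 * #(G.cliqueFinset 3) ≤ #G.triangleTriples := by
  refine mul_card_image_le_card_of_maps_to (f := fun p ↦ {p.1, p.2.1, p.2.2}) ?_ 6 ?_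
  · rintro ⟨a, b, c⟩ h
    rw [mem_triangleTriples] at h
    simpa [is3Clique_triple_iff] using ⟨h.1, h.2.2.symm, h.2.1⟩
  · intro s hs
    obtain ⟨a, b, c, hab, hac, hbc, rfl⟩ := is3Clique_iff.mp (mem_cliqueFinset_iff.mp hs)
    calc 6 = #({(a, b, c), (a, c, b), (b, a, c), (b, c, a), (c, a, b), (c, b, a)} : Finset _) := by
          simp [hab.ne, hac.ne, hbc.ne, hab.ne.symm, hac.ne.symm, hbc.ne.symm]
      _ ≤ _ := by
          refine card_le_card fun p hp ↦ ?_
          simp only [mem_insert, mem_singleton] at hp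
          rcases hp with rfl | rfl | rfl | rfl | rfl | rfl <;>
            exact mem_filter.mpr ⟨by simp [hab, hac, hbc, hab.symm, hac.symm, hbc.symm],
              by ext; simp only [mem_insert, mem_singleton] <;> tauto⟩

end SimpleGraph

section Orientation

variable {V : Type*} (arc : V → V → Prop) [DecidableRel arc]

def skewAdjMatrix : Matrix V V ℝ :=
  of fun u v ↦ if arc u v then 1 else if arc v u then -1 else 0

variable {arc}

lemma skewAdjMatrix_transpose (hasym : ∀ u v, arc u v → ¬arc v u) :
    (skewAdjMatrix arc)ᵀ = -skewAdjMatrix arc := by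
  ext u v
  by_cases huv : arc u v
  · simp [skewAdjMatrix, huv, hasym u v huv]
  · by_cases hvu : arc v u <;> simp [skewAdjMatrix, huv, hvu]

variable {G : SimpleGraph V} [DecidableRel G.Adj]

lemma skewAdjMatrix_hadamard_self (horient : ∀ u v, G.Adj u v ↔ arc u v ∨ arc v u) :
    skewAdjMatrix arc ⊙ skewAdjMatrix arc = G.adjMatrix ℝ := by
  ext u v
  by_cases huv : arc u v
  · simp [skewAdjMatrix, huv, (horient u v).mpr (.inl huv)]
  · by_cases hvu : arc v u <;> simp [skewAdjMatrix, huv, hvu, horient u v]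

lemma trace_skewAdjMatrix_mul_transpose [Fintype V]
    (horient : ∀ u v, G.Adj u v ↔ arc u v ∨ arc v u) :
    (skewAdjMatrix arc * (skewAdjMatrix arc)ᵀ).trace = 2 * #G.edgeFinset := by
  rw [← sum_hadamard_eq, skewAdjMatrix_hadamard_self horient]
  have hrow (u : V) : ∑ v, G.adjMatrix ℝ u v = G.degree u := by
    simp [← SimpleGraph.card_neighborFinset_eq_degree, SimpleGraph.neighborFinset_eq_filter]
  simp only [hrow]
  exact_mod_cast G.sum_degrees_eq_twice_card_edges

lemma eq_half_smul_map_adjMatrix_add_I_smul_skewAdjMatrix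
    (horient : ∀ u v, G.Adj u v ↔ arc u v ∨ arc v u) {H : Matrix V V ℂ}
    (hH : ∀ u v, H u v =
      if arc u v then Complex.exp ((Real.pi / 3 : ℝ) * Complex.I)
      else if arc v u then Complex.exp (-((Real.pi / 3 : ℝ) * Complex.I)) else 0) :
    H = (1 / 2 : ℂ) •
      ((G.adjMatrix ℝ).map (↑) + Complex.I • (√3 • skewAdjMatrix arc).map (↑)) := by
  have hexp (s : ℝ) (hs : s = 1 ∨ s = -1) :
      Complex.exp (s * ((Real.pi / 3 : ℝ) * Complex.I)) = 1 / 2 * (1 + Complex.I * (√3 * s)) := by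
    rw [← mul_assoc, ← Complex.ofReal_mul, Complex.exp_mul_I, ← Complex.ofReal_cos,
      ← Complex.ofReal_sin]
    rcases hs with rfl | rfl <;>
      simp only [one_mul, neg_mul, Real.cos_neg, Real.sin_neg, Real.cos_pi_div_three,
        Real.sin_pi_div_three] <;> push_cast <;> ring
  ext u v
  rw [hH]
  by_cases huv : arc u v
  · simpa [skewAdjMatrix, huv, (horient u v).mpr (.inl huv)] using hexp 1 (.inl rfl)
  · by_cases hvu : arc v u
    · simpa [skewAdjMatrix, huv, hvu, horient u v] using hexp (-1) (.inr rfl)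
    · simp [skewAdjMatrix, huv, hvu, horient u v]

lemma trace_adjMatrix_pow_three_eq_nine_mul [Fintype V] [DecidableEq V]
    (horient : ∀ u v, G.Adj u v ↔ arc u v ∨ arc v u) {H : Matrix V V ℂ}
    (hH : ∀ u v, H u v =
      if arc u v then Complex.exp ((Real.pi / 3 : ℝ) * Complex.I)
      else if arc v u then Complex.exp (-((Real.pi / 3 : ℝ) * Complex.I)) else 0)
    (hH3 : (H ^ 3).trace = 0) :
    (G.adjMatrix ℝ ^ 3).trace =
      9 * (G.adjMatrix ℝ * skewAdjMatrix arc * skewAdjMatrix arc).trace := by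
  rw [eq_half_smul_map_adjMatrix_add_I_smul_skewAdjMatrix horient hH, smul_pow, trace_smul,
    smul_eq_mul, mul_eq_zero] at hH3
  have hre := re_trace_pow_three_map_ofReal_add_I_smul (G.adjMatrix ℝ) (√3 • skewAdjMatrix arc)
  rw [hH3.resolve_left (by norm_num), Complex.zero_re] at hre
  simp only [Matrix.mul_smul, Matrix.smul_mul, smul_smul, trace_smul, smul_eq_mul,
    Real.mul_self_sqrt (by norm_num : (0 : ℝ) ≤ 3)] at hre
  linarith

lemma trace_adjMatrix_mul_skewAdjMatrix_mul_self_le [Fintype V] [DecidableEq V]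
    (hA : (G.adjMatrix ℝ).IsHermitian) {c : ℝ} (hc : ∀ i, -c ≤ hA.eigenvalues i)
    (hasym : ∀ u v, arc u v → ¬arc v u) (horient : ∀ u v, G.Adj u v ↔ arc u v ∨ arc v u) :
    (G.adjMatrix ℝ * skewAdjMatrix arc * skewAdjMatrix arc).trace ≤ 2 * c * #G.edgeFinset := by
  have h := hA.neg_mul_trace_transpose_mul_le hc (skewAdjMatrix arc)
  rw [trace_mul_comm _ (skewAdjMatrix arc), trace_skewAdjMatrix_mul_transpose horient,
    trace_mul_cycle, trace_mul_comm, ← Matrix.mul_assoc, skewAdjMatrix_transpose hasym,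
    Matrix.mul_neg, trace_neg] at h
  linarith

end Orientation

/-- If a graph `L` whose least adjacency eigenvalue is at least `-2` (e.g. a
line graph) admits an orientation with symmetric `H_{π/3}`-spectrum, then its
number of triangles satisfies `t(L) ≤ 6 |E(L)|`. -/
theorem stmt_15 (n : ℕ) (L : SimpleGraph (Fin n)) [DecidableRel L.Adj]
    (hA : (L.adjMatrix ℝ).IsHermitian)
    (hmin : ∀ i, -2 ≤ hA.eigenvalues i)
    (arc : Fin n → Fin n → Prop) [DecidableRel arc]
    (hasym : ∀ u v, arc u v → ¬ arc v u)
    (horient : ∀ u v, L.Adj u v ↔ (arc u v ∨ arc v u))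
    (H : Matrix (Fin n) (Fin n) ℂ)
    (hH : ∀ u v, H u v =
      if arc u v then Complex.exp ((Real.pi / 3 : ℝ) * Complex.I)
      else if arc v u then Complex.exp (-((Real.pi / 3 : ℝ) * Complex.I)) else 0)
    (hHerm : H.IsHermitian)
    (hsym : ∃ σ : Equiv.Perm (Fin n), ∀ i, hHerm.eigenvalues (σ i) = - hHerm.eigenvalues i) :
    (L.cliqueFinset 3).card ≤ 6 * L.edgeFinset.card := by
  obtain ⟨σ, hσ⟩ := hsym
  have hH3 : (H ^ 3).trace = 0 :=
    hHerm.trace_pow_eq_zero_of_odd_of_eigenvalues_symm (by decide) σ hσ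
  have hcount : 6 * (#(L.cliqueFinset 3) : ℝ) ≤ (L.adjMatrix ℝ ^ 3).trace := by
    rw [L.trace_adjMatrix_pow_three ℝ]
    exact_mod_cast L.six_mul_card_cliqueFinset_three_le
  have hnine := trace_adjMatrix_pow_three_eq_nine_mul horient hH hH3
  have hbound := trace_adjMatrix_mul_skewAdjMatrix_mul_self_le hA hmin hasym horient
  have : (#(L.cliqueFinset 3) : ℝ) ≤ 6 * #L.edgeFinset := by linarith
  exact_mod_cast this
end

section
/- Let d₁,…,dₙ be nonnegative reals with average α = (Σdᵢ)/n > 20. Then Σᵢ (dᵢ³ − 21dᵢ² + 20dᵢ) > 0. -/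
/-! The cubic `f x = x³ − 21x² + 20x = x(x − 1)(x − 20)` lies above its tangent line at every
point `a ≥ 21/2` on all of `[0, ∞)`, since `f x − f a − f' a (x − a) = (x − a)² (x + 2a − 21)`.
Taking `a` to be the average `α` of the `dᵢ` and summing, the linear terms cancel and
`∑ f dᵢ ≥ n f α = n α (α − 1)(α − 20) > 0`. -/

open Finset

theorem Finset.card_mul_le_sum_of_tangent {ι : Type*} (s : Finset ι) (f : ℝ → ℝ) (d : ι → ℝ)
    (a c : ℝ) (htangent : ∀ i ∈ s, f a + c * (d i - a) ≤ f (d i))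
    (havg : ∑ i ∈ s, d i = #s * a) :
    #s * f a ≤ ∑ i ∈ s, f (d i) :=
  calc (#s : ℝ) * f a = ∑ i ∈ s, (f a + c * (d i - a)) := by
        rw [sum_add_distrib, ← mul_sum, sum_sub_distrib, havg]; simp
    _ ≤ ∑ i ∈ s, f (d i) := sum_le_sum htangent

theorem cubic_tangent_le {x a : ℝ} (hx : 0 ≤ x) (ha : 21 ≤ 2 * a) :
    a ^ 3 - 21 * a ^ 2 + 20 * a + (3 * a ^ 2 - 42 * a + 20) * (x - a)
      ≤ x ^ 3 - 21 * x ^ 2 + 20 * x := by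
  have key : 0 ≤ (x - a) ^ 2 * (x + 2 * a - 21) := mul_nonneg (sq_nonneg _) (by linarith)
  linarith [show x ^ 3 - 21 * x ^ 2 + 20 * x
      - (a ^ 3 - 21 * a ^ 2 + 20 * a + (3 * a ^ 2 - 42 * a + 20) * (x - a))
      = (x - a) ^ 2 * (x + 2 * a - 21) by ring]

/-- If `d₁,…,dₙ` are nonnegative reals with average `α = (∑ dᵢ)/n > 20`, then
`∑ (dᵢ³ − 21 dᵢ² + 20 dᵢ) > 0`. -/
theorem stmt_16 (n : ℕ) (d : Fin n → ℝ) (hd : ∀ i, 0 ≤ d i)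
    (havg : (∑ i, d i) / n > 20) :
    0 < ∑ i, ((d i) ^ 3 - 21 * (d i) ^ 2 + 20 * d i) := by
  set α := (∑ i, d i) / n with hα
  have hn : (0 : ℝ) < n := by
    rcases Nat.eq_zero_or_pos n with rfl | h
    · simp [α] at havg; linarith
    · exact_mod_cast h
  have hsum : ∑ i, d i = #(univ : Finset (Fin n)) * α := by
    rw [card_univ, Fintype.card_fin, hα]; field_simp
  have hbound := card_mul_le_sum_of_tangent univ (fun x => x ^ 3 - 21 * x ^ 2 + 20 * x) d α
    (3 * α ^ 2 - 42 * α + 20) (fun i _ => cubic_tangent_le (hd i) (by linarith)) hsum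
  rw [card_univ, Fintype.card_fin] at hbound
  have hfα : 0 < α ^ 3 - 21 * α ^ 2 + 20 * α := by
    have : 0 < α * (α - 1) * (α - 20) := by
      apply mul_pos (mul_pos _ _) <;> linarith
    linarith [show α * (α - 1) * (α - 20) = α ^ 3 - 21 * α ^ 2 + 20 * α by ring]
  exact (mul_pos hn hfα).trans_le hbound
end
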